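/- For every symmetric bilinear map B : X × X → Y between finite-dimensional real inner product spaces, the expected value of z ↦ ‖B(z,z)‖² under the standard Gaussian measure μ on X equals ‖Σ_i B(e_i,e_i)‖² + 2 Σ_{i,j} ‖B(e_i,e_j)‖², where (e_i) is any orthonormal basis of X (i.e. it equals the squared norm of the trace of B plus twice the squared Hilbert–Schmidt norm of B). -/

import Mathlib

open MeasureTheory Real RealInnerProductSpace

noncomputable def stdGaussian (X : Type*) [NormedAddCommGroup X] [InnerProductSpace ℝ X]
    [FiniteDimensional ℝ X] [MeasurableSpace X] [BorelSpace X] : Measure X :=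
  volume.withDensity fun z =>
    ENNReal.ofReal (Real.exp (-‖z‖ ^ 2 / 2) / (2 * Real.pi) ^ ((Module.finrank ℝ X : ℝ) / 2))

/-!
In coordinates with respect to an orthonormal basis, the standard Gaussian measure is the product
of one-dimensional standard Gaussians (both have characteristic function `exp (-‖t‖² / 2)`).
Expanding `‖B(z,z)‖²` as a quartic polynomial in the coordinates and integrating termwise with
Isserlis' formula `E[z_i z_j z_k z_l] = δ_ij δ_kl + δ_ik δ_jl + δ_il δ_jk`, which follows from the
moments `1, 0, 1, 3` of orders `0, 1, 2, 4` of the real standard Gaussian, leaves three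
contractions: `‖∑ B(e_i,e_i)‖²` and two copies of `∑ ‖B(e_i,e_j)‖²`, by symmetry of `B`.
-/

open Finset
open scoped Nat

section GaussianMeasure

variable {X : Type*} [NormedAddCommGroup X] [InnerProductSpace ℝ X] [FiniteDimensional ℝ X]
  [MeasurableSpace X] [BorelSpace X]

lemma integral_exp_neg_sq_norm_div_two :
    ∫ z : X, rexp (-‖z‖ ^ 2 / 2) = (2 * π) ^ ((Module.finrank ℝ X : ℝ) / 2) := by
  have h := GaussianFourier.integral_rexp_neg_mul_sq_norm (V := X) (b := 1 / 2) (by norm_num)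
  rw [div_div_eq_mul_div, div_one, mul_comm π] at h
  simpa [neg_div, div_eq_inv_mul] using h

instance isFiniteMeasure_stdGaussian : IsFiniteMeasure (stdGaussian X) := by
  refine isFiniteMeasure_withDensity_ofReal (Integrable.div_const ?_ _).2
  refine Integrable.of_integral_ne_zero ?_
  rw [integral_exp_neg_sq_norm_div_two]
  positivity

lemma charFun_stdGaussian (t : X) : charFun (stdGaussian X) t = Complex.exp (-‖t‖ ^ 2 / 2) := by
  rw [charFun_apply, stdGaussian, integral_withDensity_eq_integral_toReal_smul (by fun_prop)
    (ae_of_all _ fun _ => ENNReal.ofReal_lt_top)]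
  set C : ℝ := (2 * π) ^ ((Module.finrank ℝ X : ℝ) / 2) with hC
  have hCpos : 0 < C := by positivity
  have hpt : ∀ z : X,
      (ENNReal.ofReal (rexp (-‖z‖ ^ 2 / 2) / C)).toReal • Complex.exp (⟪z, t⟫ * Complex.I)
        = (C : ℂ)⁻¹ * Complex.exp (-(1 / 2 : ℂ) * ‖z‖ ^ 2 + Complex.I * ⟪t, z⟫) := fun z => by
    rw [ENNReal.toReal_ofReal (by positivity), Complex.real_smul, Complex.ofReal_div,
      Complex.ofReal_exp, div_mul_eq_mul_div, ← Complex.exp_add, real_inner_comm]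
    push_cast
    ring_nf
  have hC' : ((π : ℂ) / (1 / 2)) ^ ((Module.finrank ℝ X : ℂ) / 2) = C := by
    rw [hC, Complex.ofReal_cpow (by positivity)]
    push_cast
    ring_nf
  simp_rw [hpt]
  rw [integral_const_mul, GaussianFourier.integral_cexp_neg_mul_sq_norm_add (by norm_num), hC',
    inv_mul_cancel_left₀ (Complex.ofReal_ne_zero.2 hCpos.ne'), Complex.I_sq]
  ring_nf

lemma stdGaussian_eq_map_pi {I : Type*} [Fintype I] (b : OrthonormalBasis I ℝ X) :
    stdGaussian X
      = (Measure.pi fun _ : I => ProbabilityTheory.gaussianReal 0 1).map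
          fun x => ∑ i, x i • b i := by
  rw [← ProbabilityTheory.stdGaussian_eq_map_pi_orthonormalBasis]
  refine Measure.ext_of_charFun (funext fun t => ?_)
  rw [charFun_stdGaussian, ProbabilityTheory.charFun_stdGaussian]

end GaussianMeasure

section Pairings

variable {I : Type*} [Fintype I] [DecidableEq I]

def pairingCount (i j k l : I) : ℕ :=
  (if i = j ∧ k = l then 1 else 0) + (if i = k ∧ j = l then 1 else 0)
    + (if i = l ∧ j = k then 1 else 0)

lemma prod_pow_single_add_single {R : Type*} [CommMonoid R] (x : I → R) (i j k l : I) :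
    ∏ m, x m ^ (Pi.single i 1 + Pi.single j 1 + Pi.single k 1 + Pi.single l 1 : I → ℕ) m
      = x i * x j * x k * x l := by
  simp only [Pi.add_apply, pow_add, prod_mul_distrib, Pi.single_apply, pow_ite, pow_one, pow_zero,
    prod_ite_eq', mem_univ, if_true]

lemma prod_moment_single_add_single {R : Type*} [CommRing R] {M : ℕ → R}
    (h0 : M 0 = 1) (h1 : M 1 = 0) (h2 : M 2 = 1) (h4 : M 4 = 3) (i j k l : I) :
    ∏ m, M ((Pi.single i 1 + Pi.single j 1 + Pi.single k 1 + Pi.single l 1 : I → ℕ) m)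
      = pairingCount i j k l := by
  rw [← prod_subset (subset_univ {i, j, k, l}) fun m _ hm => by
    simp only [mem_insert, mem_singleton, not_or] at hm
    simp [hm.1, hm.2.1, hm.2.2.1, hm.2.2.2, h0]]
  by_cases i = j <;> by_cases i = k <;> by_cases i = l <;> by_cases j = k <;> by_cases j = l <;>
    by_cases k = l <;> subst_vars <;> simp_all [pairingCount, prod_insert, Pi.single_apply, Ne.symm]

lemma sum_pairingCount_mul_inner {Y : Type*} [NormedAddCommGroup Y]
    [InnerProductSpace ℝ Y] (T : I → I → Y) (hT : ∀ i j, T i j = T j i) :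
    ∑ i, ∑ j, ∑ k, ∑ l, (pairingCount i j k l : ℝ) * ⟪T i j, T k l⟫
      = ‖∑ i, T i i‖ ^ 2 + 2 * ∑ i, ∑ j, ‖T i j‖ ^ 2 := by
  simp only [pairingCount, Nat.cast_add, Nat.cast_ite, Nat.cast_one,
    Nat.cast_zero, add_mul, sum_add_distrib, ite_mul, one_mul, zero_mul, ite_and, sum_ite_irrel,
    sum_const_zero, sum_ite_eq, mem_univ, if_true]
  rw [← real_inner_self_eq_norm_sq, sum_inner]
  simp_rw [inner_sum, ← real_inner_self_eq_norm_sq, hT _ _]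
  ring

end Pairings

namespace ProbabilityTheory

lemma integral_pow_two_mul_gaussianReal (k : ℕ) :
    ∫ x, x ^ (2 * k) ∂gaussianReal 0 1 = (2 * k - 1 : ℕ)‼ := by
  have hhalf : ∫ x in Set.Ioi (0 : ℝ), x ^ (2 * k) * rexp (-(1 / 2) * x ^ 2)
      = √(2 * π) / 2 * (2 * k - 1 : ℕ)‼ := by
    have h := integral_rpow_mul_exp_neg_mul_rpow (p := 2) (q := (2 * k : ℕ)) (b := 1 / 2)
      (by norm_num) (by linarith [(Nat.cast_nonneg _ : (0 : ℝ) ≤ (2 * k : ℕ))]) (by norm_num)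
    simp_rw [rpow_natCast, rpow_two] at h
    rw [h, neg_div, one_div, inv_rpow zero_le_two, ← rpow_neg zero_le_two, neg_neg,
      show (((2 * k : ℕ) : ℝ) + 1) / 2 = k + 1 / 2 by push_cast; ring, Gamma_nat_add_half,
      rpow_add zero_lt_two, rpow_natCast, ← sqrt_eq_rpow, sqrt_mul zero_le_two]
    field_simp
  have heven : ∫ x, x ^ (2 * k) * rexp (-(1 / 2) * x ^ 2)
      = 2 * ∫ x in Set.Ioi (0 : ℝ), x ^ (2 * k) * rexp (-(1 / 2) * x ^ 2) := by
    rw [← integral_comp_abs]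
    simp_rw [pow_mul, sq_abs]
  have hpdf : ∀ x, gaussianPDFReal 0 1 x • x ^ (2 * k)
      = (√(2 * π))⁻¹ * (x ^ (2 * k) * rexp (-(1 / 2) * x ^ 2)) := fun x => by
    simp only [gaussianPDFReal, NNReal.coe_one, mul_one, sub_zero, smul_eq_mul]
    ring_nf
  rw [integral_gaussianReal_eq_integral_smul one_ne_zero]
  simp_rw [hpdf]
  rw [integral_const_mul, heven, hhalf]
  field_simp

lemma integrable_pow_gaussianReal {μ : ℝ} {v : NNReal} (n : ℕ) :
    Integrable (fun x : ℝ => x ^ n) (gaussianReal μ v) :=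
  integrable_pow_of_mem_interior_integrableExpSet (by simp) n

variable {I : Type*} [Fintype I] [DecidableEq I]

lemma integrable_pi_gaussianReal_mul_mul_mul (i j k l : I) :
    Integrable (fun x : I → ℝ => x i * x j * x k * x l)
      (Measure.pi fun _ : I => gaussianReal 0 1) := by
  simp_rw [← prod_pow_single_add_single]
  exact Integrable.fintype_prod fun m => integrable_pow_gaussianReal _

lemma integral_pi_gaussianReal_mul_mul_mul (i j k l : I) :
    ∫ x, x i * x j * x k * x l ∂(Measure.pi fun _ : I => gaussianReal 0 1)
      = pairingCount i j k l := by
  simp_rw [← prod_pow_single_add_single]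
  refine (integral_fintype_prod_eq_prod (μ := fun _ => gaussianReal 0 1) fun m (t : ℝ) =>
    t ^ (Pi.single i 1 + Pi.single j 1 + Pi.single k 1 + Pi.single l 1 : I → ℕ) m).trans ?_
  refine prod_moment_single_add_single (M := fun e => ∫ t, t ^ e ∂gaussianReal 0 1)
    (by simp) (by simp [integral_id_gaussianReal]) ?_ ?_ i j k l
  · simpa using integral_pow_two_mul_gaussianReal 1
  · simpa using integral_pow_two_mul_gaussianReal 2

lemma integral_pi_gaussianReal_quartic (c : I → I → I → I → ℝ) :
    ∫ x, ∑ i, ∑ j, ∑ k, ∑ l, x i * x j * x k * x l * c i j k l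
        ∂(Measure.pi fun _ : I => gaussianReal 0 1)
      = ∑ i, ∑ j, ∑ k, ∑ l, (pairingCount i j k l : ℝ) * c i j k l := by
  simp only [← Fintype.sum_prod_type']
  rw [integral_finsetSum _ fun p _ => (integrable_pi_gaussianReal_mul_mul_mul _ _ _ _).mul_const _]
  refine sum_congr rfl fun p _ => ?_
  rw [integral_mul_const, integral_pi_gaussianReal_mul_mul_mul]

end ProbabilityTheory

lemma LinearMap.continuous_apply_self {X Y : Type*} [NormedAddCommGroup X] [NormedSpace ℝ X]
    [FiniteDimensional ℝ X] [NormedAddCommGroup Y] [NormedSpace ℝ Y] (B : X →ₗ[ℝ] X →ₗ[ℝ] Y) :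
    Continuous fun z => B z z := by
  let C := LinearMap.toContinuousLinearMap
    ((LinearMap.toContinuousLinearMap : (X →ₗ[ℝ] Y) ≃ₗ[ℝ] _).toLinearMap ∘ₗ B)
  change Continuous fun z => C z z
  fun_prop

section Contraction

variable {I : Type*} [Fintype I]

lemma apply_sum_smul_apply_sum_smul {X Y : Type*} [AddCommGroup X] [Module ℝ X] [AddCommGroup Y]
    [Module ℝ Y] (B : X →ₗ[ℝ] X →ₗ[ℝ] Y) (v : I → X) (x : I → ℝ) :
    B (∑ i, x i • v i) (∑ i, x i • v i) = ∑ i, ∑ j, (x i * x j) • B (v i) (v j) := by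
  simp only [map_sum, map_smul, LinearMap.sum_apply, LinearMap.smul_apply, smul_sum, smul_smul]
  exact sum_comm.trans (sum_congr rfl fun i _ => sum_congr rfl fun j _ => by rw [mul_comm])

lemma norm_sq_apply_sum_smul_apply_sum_smul {X Y : Type*} [AddCommGroup X] [Module ℝ X]
    [NormedAddCommGroup Y] [InnerProductSpace ℝ Y] (B : X →ₗ[ℝ] X →ₗ[ℝ] Y) (v : I → X)
    (x : I → ℝ) :
    ‖B (∑ i, x i • v i) (∑ i, x i • v i)‖ ^ 2
      = ∑ i, ∑ j, ∑ k, ∑ l, x i * x j * x k * x l * ⟪B (v i) (v j), B (v k) (v l)⟫ := by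
  rw [← real_inner_self_eq_norm_sq, apply_sum_smul_apply_sum_smul]
  simp only [sum_inner, inner_sum, real_inner_smul_left, real_inner_smul_right]
  refine sum_congr rfl fun i _ => sum_congr rfl fun j _ => sum_congr rfl fun k _ =>
    sum_congr rfl fun l _ => ?_
  rw [real_inner_comm]
  ring

end Contraction

theorem gaussian_integral_sq_norm_symm_bilinear_general
    {X : Type*} [NormedAddCommGroup X] [InnerProductSpace ℝ X] [FiniteDimensional ℝ X]
    [MeasurableSpace X] [BorelSpace X]
    {Y : Type*} [NormedAddCommGroup Y] [InnerProductSpace ℝ Y]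
    {I : Type*} [Fintype I] (b : OrthonormalBasis I ℝ X)
    (B : X →ₗ[ℝ] X →ₗ[ℝ] Y) (hB : ∀ x y : X, B x y = B y x) :
    ∫ z, ‖B z z‖ ^ 2 ∂(stdGaussian X)
      = ‖∑ i, B (b i) (b i)‖ ^ 2 + 2 * ∑ i, ∑ j, ‖B (b i) (b j)‖ ^ 2 := by
  classical
  calc ∫ z, ‖B z z‖ ^ 2 ∂(stdGaussian X)
      = ∫ x, ‖B (∑ i, x i • b i) (∑ i, x i • b i)‖ ^ 2
          ∂(Measure.pi fun _ : I => ProbabilityTheory.gaussianReal 0 1) := by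
        rw [stdGaussian_eq_map_pi b, integral_map (f := fun z => ‖B z z‖ ^ 2)
          (Measurable.aemeasurable (by fun_prop))
          (B.continuous_apply_self.norm.pow 2).aestronglyMeasurable]
    _ = ∑ i, ∑ j, ∑ k, ∑ l,
          (pairingCount i j k l : ℝ) * ⟪B (b i) (b j), B (b k) (b l)⟫ := by
        simp_rw [norm_sq_apply_sum_smul_apply_sum_smul]
        exact ProbabilityTheory.integral_pi_gaussianReal_quartic _
    _ = ‖∑ i, B (b i) (b i)‖ ^ 2 + 2 * ∑ i, ∑ j, ‖B (b i) (b j)‖ ^ 2 :=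
        sum_pairingCount_mul_inner _ fun i j => hB _ _

/-- For a symmetric bilinear map `B`, the Gaussian expectation of `z ↦ ‖B(z,z)‖²` equals
the squared norm of the trace of `B` plus twice the squared Hilbert–Schmidt norm of `B`. -/
theorem gaussian_integral_sq_norm_symm_bilinear
    {X : Type*} [NormedAddCommGroup X] [InnerProductSpace ℝ X] [FiniteDimensional ℝ X]
    [MeasurableSpace X] [BorelSpace X]
    {Y : Type*} [NormedAddCommGroup Y] [InnerProductSpace ℝ Y] [FiniteDimensional ℝ Y]
    {I : Type*} [Fintype I] (b : OrthonormalBasis I ℝ X)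
    (B : X →ₗ[ℝ] X →ₗ[ℝ] Y) (hB : ∀ x y : X, B x y = B y x) :
    ∫ z, ‖B z z‖ ^ 2 ∂(stdGaussian X)
      = ‖∑ i, B (b i) (b i)‖ ^ 2 + 2 * ∑ i, ∑ j, ‖B (b i) (b j)‖ ^ 2 :=
  gaussian_integral_sq_norm_symm_bilinear_general b B hB
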